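/- Let p be a prime, let G be a finite group that is a 𝒫₁⁺(p)-group with respect to a pair (ρ,τ), and let N be a normal subgroup of G. Then the quotient group G/N is a 𝒫₁⁺(p)-group with respect to the pair (ρN, τN) of images of ρ and τ in G/N. -/

import Mathlib

/-!
Each clause of `IsP1Plus` survives the passage to `G ⧸ N`. Generation by a pair is preserved by
surjections. A quotient of a cyclic group is cyclic, and a quotient of a dihedral group is
generated by an element `a` and an involution `b` inverting it, so it is `⟨a⟩` when `b ∈ ⟨a⟩` and
dihedral of order `2 · orderOf a` otherwise. For the order condition, `|H|` divides
`|HN/N| · |N|` for every subgroup `H`; writing `|G/N| = lcm(|H₁N/N|, |H₂N/N|) · t`, the identity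
`|G| = pⁿ · lcm(|H₁|, |H₂|)` then forces `t ∣ pⁿ`, so `t` is a power of `p`.
-/

open Pointwise

/-- A group is cyclic or dihedral. -/
def IsCyclicOrDihedral (H : Type*) [Group H] : Prop :=
  IsCyclic H ∨ ∃ n : ℕ, 0 < n ∧ Nonempty (H ≃* DihedralGroup n)

/-- `G` is a `𝒫₀(p)`-group with respect to `(ρ, τ)`. -/
def IsP0 (p : ℕ) {G : Type*} [Group G] (ρ τ : G) : Prop :=
  orderOf τ = 2 ∧ Subgroup.closure {ρ, τ} = ⊤ ∧
    ∃ n : ℕ, 0 < n ∧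
      Nat.card G / orderOf ρ +
          Nat.card G / Nat.card (Subgroup.closure {τ, ρ⁻¹ * τ * ρ} : Subgroup G) +
          p ^ n =
        Nat.card G / 2

/-- `G` is a `𝒫₁(p)`-group with respect to subgroups `H₁` and `H₂`. -/
def IsP1With (p : ℕ) {G : Type*} [Group G] (H₁ H₂ : Subgroup G) : Prop :=
  IsCyclicOrDihedral H₁ ∧ IsCyclicOrDihedral H₂ ∧
    ∃ n : ℕ, Nat.card G = p ^ n * Nat.lcm (Nat.card H₁) (Nat.card H₂)

/-- `G` is a `𝒫₁(p)`-group. -/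
def IsP1 (p : ℕ) (G : Type*) [Group G] : Prop :=
  ∃ H₁ H₂ : Subgroup G, IsP1With p H₁ H₂

/-- `G` is a `𝒫₁⁺(p)`-group with respect to `(ρ, τ)`. -/
def IsP1Plus (p : ℕ) {G : Type*} [Group G] (ρ τ : G) : Prop :=
  orderOf τ ≤ 2 ∧ Subgroup.closure {ρ, τ} = ⊤ ∧
    (Odd p → Subgroup.closure {ρ⁻¹ * τ⁻¹ * ρ * τ, ρ} = ⊤) ∧
    IsP1With p (Subgroup.closure {τ, ρ⁻¹ * τ * ρ}) (Subgroup.zpowers ρ)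

/-- `G` is a `𝒫₂(p)`-group. -/
def IsP2 (p : ℕ) (G : Type*) [Group G] : Prop :=
  ∀ r : ℕ, r.Prime → r ≠ p → ∀ S : Sylow r G, IsCyclicOrDihedral (S : Subgroup G)

/-- `G` is a `𝒫₂⁺(p)`-group with respect to `(ρ, τ)`. -/
def IsP2Plus (p : ℕ) {G : Type*} [Group G] (ρ τ : G) : Prop :=
  orderOf τ ≤ 2 ∧ Subgroup.closure {ρ, τ} = ⊤ ∧
    (Odd p → Subgroup.closure {ρ⁻¹ * τ⁻¹ * ρ * τ, ρ} = ⊤) ∧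
    IsP2 p G

/-- A Hall `{2,3}`-subgroup. -/
def IsHall23 {G : Type*} [Group G] (H : Subgroup G) : Prop :=
  (∃ i j : ℕ, Nat.card H = 2 ^ i * 3 ^ j) ∧ Nat.Coprime H.index 6

/-- A Hall `{2,3}'`-subgroup. -/
def IsHall23' {G : Type*} [Group G] (K : Subgroup G) : Prop :=
  Nat.Coprime (Nat.card K) 6 ∧ ∃ i j : ℕ, K.index = 2 ^ i * 3 ^ j

/-- The projective special linear group of degree 2 over `R`. -/
abbrev ProjSL2 (R : Type*) [CommRing R] : Type _ :=
  Matrix.SpecialLinearGroup (Fin 2) R ⧸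
    Subgroup.center (Matrix.SpecialLinearGroup (Fin 2) R)

/-- The projective general linear group of degree 2 over `R`. -/
abbrev ProjGL2 (R : Type*) [CommRing R] : Type _ :=
  Matrix.GeneralLinearGroup (Fin 2) R ⧸
    Subgroup.center (Matrix.GeneralLinearGroup (Fin 2) R)

namespace ZMod

variable {n : ℕ} [NeZero n]

theorem pow_val_add {M : Type*} [Monoid M] {a : M} (ha : a ^ n = 1) (i j : ZMod n) :
    a ^ (i + j).val = a ^ i.val * a ^ j.val := by
  rw [ZMod.val_add, ← pow_eq_pow_mod _ ha, pow_add]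

theorem pow_val_neg {G : Type*} [Group G] {a : G} (ha : a ^ n = 1) (i : ZMod n) :
    a ^ (-i).val = (a ^ i.val)⁻¹ :=
  eq_inv_of_mul_eq_one_left <| by rw [← pow_val_add ha, neg_add_cancel, val_zero, pow_zero]

end ZMod

theorem mul_pow_mul_eq_inv_of_mul_mul_eq_inv {G : Type*} [Group G] {a b : G} (hb : b * b = 1)
    (hab : b * a * b = a⁻¹) (k : ℕ) : b * a ^ k * b = (a ^ k)⁻¹ := by
  have hbinv : b⁻¹ = b := inv_eq_of_mul_eq_one_right hb
  have h := conj_pow (a := b) (b := a) (i := k)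
  rwa [hbinv, hab, inv_pow, eq_comm] at h

namespace DihedralGroup

variable {n : ℕ}

theorem closure_r_one_sr_zero :
    Subgroup.closure {r 1, sr 0} = (⊤ : Subgroup (DihedralGroup n)) := by
  have hr : ∀ i : ZMod n, r i ∈ Subgroup.closure {r (1 : ZMod n), sr 0} := by
    intro i
    obtain ⟨k, rfl⟩ := ZMod.intCast_surjective i
    rw [← r_one_zpow]
    exact zpow_mem (Subgroup.subset_closure (Set.mem_insert _ _)) k
  rw [eq_top_iff]
  rintro (i | i) -
  · exact hr i
  · rw [← zero_add i, ← sr_mul_r]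
    exact mul_mem (Subgroup.subset_closure (Set.mem_insert_of_mem _ rfl)) (hr i)

variable [NeZero n] {K : Type*} [Group K]

def lift (a b : K) (ha : a ^ n = 1) (hb : b * b = 1) (hab : b * a * b = a⁻¹) :
    DihedralGroup n →* K where
  toFun
    | r i => a ^ i.val
    | sr i => b * a ^ i.val
  map_one' := show a ^ (0 : ZMod n).val = 1 by rw [ZMod.val_zero, pow_zero]
  map_mul' := by
    have hsub : ∀ i j : ZMod n, a ^ (j - i).val = (a ^ i.val)⁻¹ * a ^ j.val := fun i j => by
      rw [← neg_add_eq_sub, ZMod.pow_val_add ha, ZMod.pow_val_neg ha]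
    have hconj := mul_pow_mul_eq_inv_of_mul_mul_eq_inv hb hab
    rintro (i | i) (j | j)
    · exact ZMod.pow_val_add ha i j
    · show b * a ^ (j - i).val = a ^ i.val * (b * a ^ j.val)
      rw [hsub, ← hconj, ← mul_assoc, ← mul_assoc, ← mul_assoc, hb, one_mul, mul_assoc]
    · show b * a ^ (i + j).val = b * a ^ i.val * a ^ j.val
      rw [ZMod.pow_val_add ha, mul_assoc]
    · show a ^ (j - i).val = b * a ^ i.val * (b * a ^ j.val)
      rw [hsub, ← hconj, mul_assoc]

theorem lift_r_one (a b : K) (ha : a ^ n = 1) (hb : b * b = 1) (hab : b * a * b = a⁻¹) :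
    lift a b ha hb hab (r 1) = a :=
  show a ^ (1 : ZMod n).val = a by rw [ZMod.val_one_eq_one_mod, ← pow_eq_pow_mod _ ha, pow_one]

theorem lift_sr_zero (a b : K) (ha : a ^ n = 1) (hb : b * b = 1) (hab : b * a * b = a⁻¹) :
    lift a b ha hb hab (sr 0) = b :=
  show b * a ^ (0 : ZMod n).val = b by rw [ZMod.val_zero, pow_zero, mul_one]

end DihedralGroup

open DihedralGroup in
theorem isCyclicOrDihedral_of_closure_pair_eq_top {K : Type*} [Group K] [Finite K] {a b : K}
    (hb : b * b = 1) (hab : b * a * b = a⁻¹) (hcl : Subgroup.closure {a, b} = ⊤) :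
    IsCyclicOrDihedral K := by
  have hcl_le : ∀ S : Subgroup K, a ∈ S → b ∈ S → S = ⊤ := fun S ha hb => by
    rw [eq_top_iff, ← hcl, Subgroup.closure_le, Set.insert_subset_iff, Set.singleton_subset_iff]
    exact ⟨ha, hb⟩
  by_cases hba : b ∈ Subgroup.zpowers a
  · have htop := hcl_le _ (Subgroup.mem_zpowers a) hba
    exact Or.inl (isCyclic_iff_exists_zpowers_eq_top.mpr ⟨a, htop⟩)
  · have : NeZero (orderOf a) := ⟨(orderOf_pos a).ne'⟩
    set F := lift a b (pow_orderOf_eq_one a) hb hab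
    have hinj : Function.Injective F := by
      rw [injective_iff_map_eq_one]
      rintro (i | i) hi
      · change a ^ i.val = 1 at hi
        rw [one_def, r.injEq, ← ZMod.val_eq_zero]
        exact Nat.eq_zero_of_dvd_of_lt (orderOf_dvd_of_pow_eq_one hi) (ZMod.val_lt i)
      · change b * a ^ i.val = 1 at hi
        refine absurd ?_ hba
        rw [eq_inv_of_mul_eq_one_left hi]
        exact inv_mem (pow_mem (Subgroup.mem_zpowers a) i.val)
    have hsurj : Function.Surjective F := by
      rw [← MonoidHom.range_eq_top]
      exact hcl_le _ ⟨r 1, lift_r_one ..⟩ ⟨sr 0, lift_sr_zero ..⟩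
    exact Or.inr ⟨orderOf a, orderOf_pos a, ⟨(MulEquiv.ofBijective F ⟨hinj, hsurj⟩).symm⟩⟩

theorem Subgroup.closure_image_eq_top_of_surjective {G H : Type*} [Group G] [Group H]
    {f : G →* H} (hf : Function.Surjective f) {s : Set G} (hs : Subgroup.closure s = ⊤) :
    Subgroup.closure (f '' s) = ⊤ := by
  rw [← MonoidHom.map_closure, hs, Subgroup.map_top_of_surjective f hf]

open DihedralGroup in
theorem IsCyclicOrDihedral.of_surjective {H K : Type*} [Group H] [Group K]
    (h : IsCyclicOrDihedral H) {f : H →* K} (hf : Function.Surjective f) :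
    IsCyclicOrDihedral K := by
  rcases h with h | ⟨n, hn, ⟨φ⟩⟩
  · exact Or.inl (isCyclic_of_surjective f hf)
  · have : NeZero n := ⟨hn.ne'⟩
    set g := f.comp φ.symm.toMonoidHom
    have hg : Function.Surjective g := hf.comp φ.symm.surjective
    have : Finite K := Finite.of_surjective g hg
    refine isCyclicOrDihedral_of_closure_pair_eq_top (a := g (r 1)) (b := g (sr 0)) ?_ ?_ ?_
    · rw [← map_mul, sr_mul_self, map_one]
    · rw [← map_mul, ← map_mul, ← map_inv, sr_mul_r, sr_mul_sr, inv_r, zero_add, zero_sub]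
    · rw [← Set.image_pair]
      exact Subgroup.closure_image_eq_top_of_surjective hg closure_r_one_sr_zero

theorem Subgroup.card_dvd_card_map_mul_card_ker {G H : Type*} [Group G] [Group H]
    (f : G →* H) (K : Subgroup G) : Nat.card K ∣ Nat.card (K.map f) * Nat.card f.ker := by
  have h := Subgroup.relIndex_inf_mul_relIndex ⊥ f.ker K
  rw [bot_inf_eq, Subgroup.relIndex_bot_left, Subgroup.relIndex_bot_left,
    Subgroup.relIndex_ker] at h
  rw [← h, mul_comm]
  exact mul_dvd_mul_left _ (Subgroup.card_dvd_of_le inf_le_left)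

theorem exists_card_eq_prime_pow_mul_lcm_card_map {G H : Type*} [Group G] [Group H] [Finite G]
    {p : ℕ} (hp : p.Prime) {f : G →* H} (hf : Function.Surjective f) {H₁ H₂ : Subgroup G} {n : ℕ}
    (hcard : Nat.card G = p ^ n * Nat.lcm (Nat.card H₁) (Nat.card H₂)) :
    ∃ m, Nat.card H = p ^ m * Nat.lcm (Nat.card (H₁.map f)) (Nat.card (H₂.map f)) := by
  set L := Nat.lcm (Nat.card (H₁.map f)) (Nat.card (H₂.map f))
  obtain ⟨t, ht⟩ : L ∣ Nat.card H :=
    Nat.lcm_dvd (Subgroup.card_subgroup_dvd_card _) (Subgroup.card_subgroup_dvd_card _)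
  have hG : Nat.card G = Nat.card H * Nat.card f.ker := by
    rw [← f.ker.card_mul_index, Subgroup.index_ker, f.range_eq_top_of_surjective hf,
      Subgroup.card_top, mul_comm]
  have hlcm : Nat.lcm (Nat.card H₁) (Nat.card H₂) ∣ L * Nat.card f.ker :=
    Nat.lcm_dvd
      ((Subgroup.card_dvd_card_map_mul_card_ker f H₁).trans
        (mul_dvd_mul_right (Nat.dvd_lcm_left _ _) _))
      ((Subgroup.card_dvd_card_map_mul_card_ker f H₂).trans
        (mul_dvd_mul_right (Nat.dvd_lcm_right _ _) _))
  have htp : t ∣ p ^ n := by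
    have : Finite H := Finite.of_surjective f hf
    have hpos : 0 < L * Nat.card f.ker :=
      Nat.mul_pos (Nat.lcm_pos Nat.card_pos Nat.card_pos) Nat.card_pos
    refine Nat.dvd_of_mul_dvd_mul_left hpos ?_
    calc L * Nat.card f.ker * t = Nat.card G := by rw [hG, ht]; ring
      _ = p ^ n * Nat.lcm (Nat.card H₁) (Nat.card H₂) := hcard
      _ ∣ L * Nat.card f.ker * p ^ n := by rw [mul_comm]; exact mul_dvd_mul_right hlcm _
  obtain ⟨m, -, rfl⟩ := (Nat.dvd_prime_pow hp).1 htp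
  exact ⟨m, by rw [ht, mul_comm]⟩

theorem IsP1With.map {G H : Type*} [Group G] [Group H] [Finite G] {p : ℕ} (hp : p.Prime)
    {f : G →* H} (hf : Function.Surjective f) {H₁ H₂ : Subgroup G} (h : IsP1With p H₁ H₂) :
    IsP1With p (H₁.map f) (H₂.map f) := by
  obtain ⟨hcd₁, hcd₂, n, hcard⟩ := h
  exact ⟨hcd₁.of_surjective (f.subgroupMap_surjective H₁),
    hcd₂.of_surjective (f.subgroupMap_surjective H₂),
    exists_card_eq_prime_pow_mul_lcm_card_map hp hf hcard⟩

/-- If the finite group `G` is a `𝒫₁⁺(p)`-group with respect to `(ρ, τ)` and `N` is a normal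
subgroup of `G`, then `G/N` is a `𝒫₁⁺(p)`-group with respect to `(ρN, τN)`. -/
theorem stmt5 {G : Type*} [Group G] [Finite G] {p : ℕ} (hp : p.Prime)
    (ρ τ : G) (h : IsP1Plus p ρ τ) (N : Subgroup G) [N.Normal] :
    IsP1Plus p (ρ : G ⧸ N) (τ : G ⧸ N) := by
  obtain ⟨hτ, hgen, hcomm, hP1⟩ := h
  have hπ : Function.Surjective (QuotientGroup.mk' N) := QuotientGroup.mk'_surjective N
  have hpair {x y : G} (hxy : Subgroup.closure {x, y} = ⊤) :
      Subgroup.closure {(x : G ⧸ N), (y : G ⧸ N)} = ⊤ :=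
    Set.image_pair (QuotientGroup.mk' N) x y ▸
      Subgroup.closure_image_eq_top_of_surjective hπ hxy
  have hτ' : orderOf (τ : G ⧸ N) ≤ 2 :=
    (Nat.le_of_dvd (orderOf_pos τ) (orderOf_map_dvd (QuotientGroup.mk' N) τ)).trans hτ
  refine ⟨hτ', hpair hgen, fun hodd => hpair (hcomm hodd), ?_⟩
  have hP1' := hP1.map hp hπ
  rwa [MonoidHom.map_closure, Set.image_pair, MonoidHom.map_zpowers] at hP1'
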